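/- arXiv:0708.2271 — 4 statements merged into one kernel-verified Lean document; each statement's English description precedes it below -/
import Mathlib

section
/- Let $g_0$ be a nonvanishing $C^2$ solution of $-g_0'' + q g_0 = 0$ on an interval $I$ containing $0$. Define recursively $\widetilde{X}^{(0)} \equiv 1$ and $\widetilde{X}^{(n)}(x) = n \int_0^x \widetilde{X}^{(n-1)}(\xi) g_0^2(\xi) d\xi$ for odd $n$, $\widetilde{X}^{(n)}(x) = n \int_0^x \widetilde{X}^{(n-1)}(\xi) g_0^{-2}(\xi) d\xi$ for even $n$. Then for every even $n \geq 2$, the function $g_0 \widetilde{X}^{(n)}$ satisfies $(\partial_x^2 - q)(g_0 \widetilde{X}^{(n)}) = n(n-1) g_0 \widetilde{X}^{(n-2)}$. -/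
/-!
For even `n` the recursion gives `X̃⁽ⁿ⁾' = n X̃⁽ⁿ⁻¹⁾ / g₀²`, so `(g₀ X̃⁽ⁿ⁾)' = g₀' X̃⁽ⁿ⁾ + n X̃⁽ⁿ⁻¹⁾ / g₀`.
Differentiating once more, the two terms `± n g₀' X̃⁽ⁿ⁻¹⁾ / g₀²` cancel and what remains is
`g₀'' X̃⁽ⁿ⁾ + n X̃⁽ⁿ⁻¹⁾' / g₀ = q g₀ X̃⁽ⁿ⁾ + n (n - 1) g₀ X̃⁽ⁿ⁻²⁾`, using `X̃⁽ⁿ⁻¹⁾' = (n - 1) X̃⁽ⁿ⁻²⁾ g₀²`.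
-/

open scoped Nat

/-- The SPPS recursive integrals: `spps wodd weven 0 ≡ 1` and
`spps wodd weven n x = n ∫₀ˣ spps wodd weven (n-1) · w`, where the weight `w`
is `wodd` when `n` is odd and `weven` when `n` is even. -/
noncomputable def spps (wodd weven : ℝ → ℂ) : ℕ → ℝ → ℂ
  | 0 => fun _ => 1
  | n + 1 => fun x => (n + 1 : ℂ) *
      ∫ t in (0:ℝ)..x,
        spps wodd weven n t * (if (n + 1) % 2 = 1 then wodd t else weven t)

open Set Filter Topology

theorem hasDerivAt_integral_of_continuousOn {E : Type*} [NormedAddCommGroup E]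
    [NormedSpace ℝ E] [CompleteSpace E] {s : Set ℝ} (hs : IsOpen s) (hs' : s.OrdConnected)
    {a y : ℝ} (ha : a ∈ s) (hy : y ∈ s) {f : ℝ → E} (hf : ContinuousOn f s) :
    HasDerivAt (fun u => ∫ t in a..u, f t) (f y) y :=
  intervalIntegral.integral_hasDerivAt_right
    ((hf.mono (hs'.uIcc_subset ha hy)).intervalIntegrable)
    (hf.stronglyMeasurableAtFilter hs y hy) (hf.continuousAt (hs.mem_nhds hy))

section spps

variable {s : Set ℝ} {wodd weven : ℝ → ℂ}

theorem hasDerivAt_spps_succ_of_continuousOn (hs : IsOpen s) (hs' : s.OrdConnected)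
    (h0 : 0 ∈ s) (hwo : ContinuousOn wodd s) (hwe : ContinuousOn weven s) {k : ℕ}
    (hk : ContinuousOn (spps wodd weven k) s) {y : ℝ} (hy : y ∈ s) :
    HasDerivAt (spps wodd weven (k + 1))
      ((k + 1 : ℂ) * (spps wodd weven k y * if (k + 1) % 2 = 1 then wodd y else weven y)) y :=
  (hasDerivAt_integral_of_continuousOn hs hs' h0 hy
    (hk.mul (by split_ifs <;> assumption))).const_mul _

theorem continuousOn_spps (hs : IsOpen s) (hs' : s.OrdConnected) (h0 : 0 ∈ s)
    (hwo : ContinuousOn wodd s) (hwe : ContinuousOn weven s) :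
    ∀ n, ContinuousOn (spps wodd weven n) s
  | 0 => continuousOn_const
  | k + 1 => fun _ hy =>
    (hasDerivAt_spps_succ_of_continuousOn hs hs' h0 hwo hwe
      (continuousOn_spps hs hs' h0 hwo hwe k) hy).continuousAt.continuousWithinAt

theorem hasDerivAt_spps_succ (hs : IsOpen s) (hs' : s.OrdConnected) (h0 : 0 ∈ s)
    (hwo : ContinuousOn wodd s) (hwe : ContinuousOn weven s) (k : ℕ) {y : ℝ} (hy : y ∈ s) :
    HasDerivAt (spps wodd weven (k + 1))
      ((k + 1 : ℂ) * (spps wodd weven k y * if (k + 1) % 2 = 1 then wodd y else weven y)) y :=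
  hasDerivAt_spps_succ_of_continuousOn hs hs' h0 hwo hwe
    (continuousOn_spps hs hs' h0 hwo hwe k) hy

end spps

theorem deriv_deriv_mul_of_hasDerivAt_div_sq {g g' X Y : ℝ → ℂ} {g'' Y' : ℂ} {x : ℝ}
    (hg : ∀ᶠ y in 𝓝 x, HasDerivAt g (g' y) y) (hg' : HasDerivAt g' g'' x)
    (hX : ∀ᶠ y in 𝓝 x, HasDerivAt X (Y y / g y ^ 2) y) (hY : HasDerivAt Y Y' x)
    (hgx : g x ≠ 0) :
    deriv (deriv fun y => g y * X y) x = g'' * X x + Y' / g x := by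
  have hfirst : deriv (fun y => g y * X y) =ᶠ[𝓝 x] fun y => g' y * X y + Y y / g y := by
    filter_upwards [hg, hX] with y hgy hXy
    rw [(hgy.fun_mul hXy).deriv]
    rcases eq_or_ne (g y) 0 with h | h
    · simp [h]
    · field_simp
  have hsecond := (hg'.fun_mul hX.self_of_nhds).fun_add (hY.fun_div hg.self_of_nhds hgx)
  rw [hfirst.deriv_eq, hsecond.deriv]
  field_simp
  ring

theorem spps_even_step_general (a b : ℝ) (ha : a < 0) (hb : 0 < b)
    (q g0 : ℝ → ℂ)
    (hg : ContDiffOn ℝ 2 g0 (Set.Ioo a b))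
    (hg0 : ∀ x ∈ Set.Ioo a b, g0 x ≠ 0)
    (heq : ∀ x ∈ Set.Ioo a b, deriv (deriv g0) x = q x * g0 x) :
    ∀ n : ℕ, 2 ≤ n → n % 2 = 0 → ∀ x ∈ Set.Ioo a b,
      deriv (deriv (fun y =>
          g0 y * spps (fun t => g0 t ^ 2) (fun t => (g0 t ^ 2)⁻¹) n y)) x -
        q x * (g0 x * spps (fun t => g0 t ^ 2) (fun t => (g0 t ^ 2)⁻¹) n x) =
      (n : ℂ) * ((n : ℂ) - 1) * g0 x *
        spps (fun t => g0 t ^ 2) (fun t => (g0 t ^ 2)⁻¹) (n - 2) x := by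
  rintro n hn hn_even x hx
  obtain ⟨m, rfl⟩ : ∃ m, n = m + 2 := ⟨n - 2, by omega⟩
  have hs : IsOpen (Ioo a b) := isOpen_Ioo
  have hsq : ContinuousOn (fun t => g0 t ^ 2) (Ioo a b) := hg.continuousOn.pow 2
  have hinv : ContinuousOn (fun t => (g0 t ^ 2)⁻¹) (Ioo a b) :=
    hsq.inv₀ fun y hy => pow_ne_zero 2 (hg0 y hy)
  have hX_succ := hasDerivAt_spps_succ hs ordConnected_Ioo ⟨ha, hb⟩ hsq hinv
  set X := spps (fun t => g0 t ^ 2) (fun t => (g0 t ^ 2)⁻¹)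
  have hg1 : ∀ y ∈ Ioo a b, HasDerivAt g0 (deriv g0 y) y := fun y hy =>
    ((hg.differentiableOn two_ne_zero).differentiableAt (hs.mem_nhds hy)).hasDerivAt
  have hg2 : HasDerivAt (deriv g0) (deriv (deriv g0) x) x :=
    (((hg.deriv_of_isOpen hs le_rfl).differentiableOn one_ne_zero).differentiableAt
      (hs.mem_nhds hx)).hasDerivAt
  have hX : ∀ y ∈ Ioo a b, HasDerivAt (X (m + 2))
      ((m + 2 : ℂ) * X (m + 1) y / g0 y ^ 2) y := by
    intro y hy
    convert hX_succ (m + 1) hy using 1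
    rw [if_neg (by omega)]
    push_cast
    ring
  have hY := (hX_succ m hx).const_mul (m + 2 : ℂ)
  rw [if_pos (by omega)] at hY
  rw [deriv_deriv_mul_of_hasDerivAt_div_sq (eventually_of_mem (hs.mem_nhds hx) hg1) hg2
    (eventually_of_mem (hs.mem_nhds hx) hX) hY (hg0 x hx), heq x hx, Nat.add_sub_cancel]
  have hg_cancel : g0 x ^ 2 * (g0 x)⁻¹ = g0 x := by field_simp [hg0 x hx]
  push_cast
  linear_combination ((m + 2) * (m + 1) * X m x : ℂ) * hg_cancel

/-- For even `n ≥ 2`, `(∂ₓ² - q)(g₀ X̃⁽ⁿ⁾) = n(n-1) g₀ X̃⁽ⁿ⁻²⁾`, where `X̃⁽ⁿ⁾`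
are the recursive integrals with weight `g₀²` for odd `n` and `g₀⁻²` for even `n`. -/
theorem spps_even_step (a b : ℝ) (ha : a < 0) (hb : 0 < b)
    (q g0 : ℝ → ℂ)
    (hq : ContinuousOn q (Set.Ioo a b))
    (hg : ContDiffOn ℝ 2 g0 (Set.Ioo a b))
    (hg0 : ∀ x ∈ Set.Ioo a b, g0 x ≠ 0)
    (heq : ∀ x ∈ Set.Ioo a b, deriv (deriv g0) x = q x * g0 x) :
    ∀ n : ℕ, 2 ≤ n → n % 2 = 0 → ∀ x ∈ Set.Ioo a b,
      deriv (deriv (fun y =>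
          g0 y * spps (fun t => g0 t ^ 2) (fun t => (g0 t ^ 2)⁻¹) n y)) x -
        q x * (g0 x * spps (fun t => g0 t ^ 2) (fun t => (g0 t ^ 2)⁻¹) n x) =
      (n : ℂ) * ((n : ℂ) - 1) * g0 x *
        spps (fun t => g0 t ^ 2) (fun t => (g0 t ^ 2)⁻¹) (n - 2) x :=
  spps_even_step_general a b ha hb q g0 hg hg0 heq
end

section
/- Under boundedness assumptions $|g_0| \leq M$ and $|1/g_0| \leq M$ on the interval $[-a,a]$, the recursive integrals satisfy the estimates $|\widetilde{X}^{(n)}(x)| \leq M^{2n} |x|^n$ and $|X^{(n)}(x)| \leq M^{2n} |x|^n$ for all $x \in [-a,a]$ and all $n \geq 0$; consequently the power series $\sum_{n} \frac{|\omega|^n}{n!} |\widetilde{X}^{(n)}(x)|$ converges uniformly on $[-a,a]$ for every $\omega \in \mathbb{C}$. -/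
open scoped Nat

/-! By induction, if both weights are bounded by `C` between `0` and `x`, each integration
gains a factor `C |t|`, and the factor `n` in front of the `n`-th integral cancels the `1/n`
coming from `∫₀ˣ |t|ⁿ⁻¹ dt`; so `‖X⁽ⁿ⁾(x)‖ ≤ Cⁿ |x|ⁿ`, and `C = M²` here. The series is then
dominated on `[-a, a]` by the summable `(‖ω‖ M² a)ⁿ / n!`. -/

theorem integral_abs_pow_of_nonneg {x : ℝ} (hx : 0 ≤ x) (n : ℕ) :
    ∫ t in (0:ℝ)..x, |t| ^ n = x ^ (n + 1) / (n + 1) := by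
  have hcongr : ∫ t in (0:ℝ)..x, |t| ^ n = ∫ t in (0:ℝ)..x, t ^ n := by
    refine intervalIntegral.integral_congr fun t ht => ?_
    rw [Set.uIcc_of_le hx] at ht
    simp only [abs_of_nonneg ht.1]
  rw [hcongr, integral_pow, zero_pow n.succ_ne_zero, sub_zero]

theorem abs_integral_abs_pow (x : ℝ) (n : ℕ) :
    |∫ t in (0:ℝ)..x, |t| ^ n| = |x| ^ (n + 1) / (n + 1) := by
  rcases le_total 0 x with hx | hx
  · rw [integral_abs_pow_of_nonneg hx, abs_of_nonneg hx, abs_of_nonneg (by positivity)]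
  · have hreflect : ∫ t in (0:ℝ)..x, |t| ^ n = -∫ t in (0:ℝ)..-x, |t| ^ n := by
      have := intervalIntegral.integral_comp_neg (a := 0) (b := x) fun t => |t| ^ n
      simp only [abs_neg, neg_zero] at this
      rw [this, intervalIntegral.integral_symm]
    rw [hreflect, abs_neg, integral_abs_pow_of_nonneg (neg_nonneg.2 hx), abs_of_nonpos hx,
      abs_of_nonneg (div_nonneg (pow_nonneg (neg_nonneg.2 hx) _) (by positivity))]

theorem norm_spps_le {wodd weven : ℝ → ℂ} {C : ℝ} {x : ℝ}
    (hodd : ∀ t ∈ Set.uIcc 0 x, ‖wodd t‖ ≤ C) (heven : ∀ t ∈ Set.uIcc 0 x, ‖weven t‖ ≤ C)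
    (n : ℕ) : ‖spps wodd weven n x‖ ≤ C ^ n * |x| ^ n := by
  induction n generalizing x with
  | zero => simp [spps]
  | succ n ih =>
    have hC : 0 ≤ C := (norm_nonneg _).trans (hodd 0 Set.left_mem_uIcc)
    have hintegrand : ∀ t ∈ Set.uIoc 0 x, ‖spps wodd weven n t *
        (if (n + 1) % 2 = 1 then wodd t else weven t)‖ ≤ C ^ (n + 1) * |t| ^ n := by
      intro t ht
      have hsub : Set.uIcc 0 t ⊆ Set.uIcc 0 x :=
        Set.uIcc_subset_uIcc_left (Set.uIoc_subset_uIcc ht)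
      have hweight : ‖if (n + 1) % 2 = 1 then wodd t else weven t‖ ≤ C := by
        split_ifs
        exacts [hodd t (Set.uIoc_subset_uIcc ht), heven t (Set.uIoc_subset_uIcc ht)]
      calc _ ≤ C ^ n * |t| ^ n * C := by
            rw [norm_mul]
            exact mul_le_mul (ih (fun s hs => hodd s (hsub hs)) (fun s hs => heven s (hsub hs)))
              hweight (norm_nonneg _) (by positivity)
        _ = C ^ (n + 1) * |t| ^ n := by ring
    -- Only the majorant has to be integrable: otherwise the integral is `0`.
    have hintegral := intervalIntegral.norm_integral_le_abs_of_norm_le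
      ((MeasureTheory.ae_restrict_iff' measurableSet_uIoc).2 (.of_forall hintegrand))
      ((continuous_const.mul (continuous_abs.pow n)).intervalIntegrable
        (μ := MeasureTheory.volume) 0 x)
    rw [intervalIntegral.integral_const_mul, abs_mul, abs_of_nonneg (by positivity),
      abs_integral_abs_pow] at hintegral
    calc ‖spps wodd weven (n + 1) x‖
        ≤ (n + 1) * (C ^ (n + 1) * (|x| ^ (n + 1) / (n + 1))) := by
          rw [spps, norm_mul, ← Nat.cast_succ, Complex.norm_natCast, Nat.cast_succ]
          gcongr
      _ = C ^ (n + 1) * |x| ^ (n + 1) := by field_simp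

theorem spps_estimates_general (a M : ℝ) (ω : ℂ)
    (g0 : ℝ → ℂ)
    (hM1 : ∀ x ∈ Set.Icc (-a) a, ‖g0 x‖ ≤ M)
    (hM2 : ∀ x ∈ Set.Icc (-a) a, ‖(g0 x)⁻¹‖ ≤ M) :
    (∀ n : ℕ, ∀ x ∈ Set.Icc (-a) a,
      ‖spps (fun t => g0 t ^ 2) (fun t => (g0 t ^ 2)⁻¹) n x‖ ≤ M ^ (2 * n) * |x| ^ n ∧
      ‖spps (fun t => (g0 t ^ 2)⁻¹) (fun t => g0 t ^ 2) n x‖ ≤ M ^ (2 * n) * |x| ^ n) ∧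
    TendstoUniformlyOn
      (fun N x => ∑ n ∈ Finset.range N,
        ‖ω‖ ^ n / (n ! : ℝ) *
          ‖spps (fun t => g0 t ^ 2) (fun t => (g0 t ^ 2)⁻¹) n x‖)
      (fun x => ∑' n : ℕ,
        ‖ω‖ ^ n / (n ! : ℝ) *
          ‖spps (fun t => g0 t ^ 2) (fun t => (g0 t ^ 2)⁻¹) n x‖)
      Filter.atTop (Set.Icc (-a) a) := by
  have hsub : ∀ x ∈ Set.Icc (-a) a, Set.uIcc 0 x ⊆ Set.Icc (-a) a := fun x hx =>
    Set.uIcc_subset_Icc ⟨by linarith [hx.1, hx.2], by linarith [hx.1, hx.2]⟩ hx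
  have hsq : ∀ x ∈ Set.Icc (-a) a, ‖g0 x ^ 2‖ ≤ M ^ 2 := fun x hx => by
    rw [norm_pow]; exact pow_le_pow_left₀ (norm_nonneg _) (hM1 x hx) 2
  have hinv : ∀ x ∈ Set.Icc (-a) a, ‖(g0 x ^ 2)⁻¹‖ ≤ M ^ 2 := fun x hx => by
    rw [← inv_pow, norm_pow]; exact pow_le_pow_left₀ (norm_nonneg _) (hM2 x hx) 2
  have hbound : ∀ n, ∀ x ∈ Set.Icc (-a) a,
      ‖spps (fun t => g0 t ^ 2) (fun t => (g0 t ^ 2)⁻¹) n x‖ ≤ M ^ (2 * n) * |x| ^ n ∧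
      ‖spps (fun t => (g0 t ^ 2)⁻¹) (fun t => g0 t ^ 2) n x‖ ≤ M ^ (2 * n) * |x| ^ n :=
    fun n x hx => by
      have hsq' := fun t ht => hsq t (hsub x hx ht)
      have hinv' := fun t ht => hinv t (hsub x hx ht)
      rw [pow_mul]
      exact ⟨norm_spps_le hsq' hinv' n, norm_spps_le hinv' hsq' n⟩
  refine ⟨hbound, tendstoUniformlyOn_tsum_nat
    (Real.summable_pow_div_factorial (‖ω‖ * (M ^ 2 * a))) fun n x hx => ?_⟩
  rw [Real.norm_eq_abs, abs_of_nonneg (by positivity), mul_pow, mul_pow, ← pow_mul,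
    mul_div_right_comm]
  gcongr
  exact (hbound n x hx).1.trans (by gcongr; exacts [(even_two_mul n).pow_nonneg M, abs_le.2 hx])

/-- Estimates `|X̃⁽ⁿ⁾(x)| ≤ M^{2n} |x|ⁿ`, `|X⁽ⁿ⁾(x)| ≤ M^{2n} |x|ⁿ` on `[-a,a]`,
and the uniform convergence of the majorant series. -/
theorem spps_estimates (a M : ℝ) (ha : 0 < a) (ω : ℂ)
    (g0 : ℝ → ℂ)
    (hg : ContinuousOn g0 (Set.Icc (-a) a))
    (hg0 : ∀ x ∈ Set.Icc (-a) a, g0 x ≠ 0)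
    (hM1 : ∀ x ∈ Set.Icc (-a) a, ‖g0 x‖ ≤ M)
    (hM2 : ∀ x ∈ Set.Icc (-a) a, ‖(g0 x)⁻¹‖ ≤ M) :
    (∀ n : ℕ, ∀ x ∈ Set.Icc (-a) a,
      ‖spps (fun t => g0 t ^ 2) (fun t => (g0 t ^ 2)⁻¹) n x‖ ≤ M ^ (2 * n) * |x| ^ n ∧
      ‖spps (fun t => (g0 t ^ 2)⁻¹) (fun t => g0 t ^ 2) n x‖ ≤ M ^ (2 * n) * |x| ^ n) ∧
    TendstoUniformlyOn
      (fun N x => ∑ n ∈ Finset.range N,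
        ‖ω‖ ^ n / (n ! : ℝ) *
          ‖spps (fun t => g0 t ^ 2) (fun t => (g0 t ^ 2)⁻¹) n x‖)
      (fun x => ∑' n : ℕ,
        ‖ω‖ ^ n / (n ! : ℝ) *
          ‖spps (fun t => g0 t ^ 2) (fun t => (g0 t ^ 2)⁻¹) n x‖)
      Filter.atTop (Set.Icc (-a) a) :=
  spps_estimates_general a M ω g0 hM1 hM2
end

section
/- Under the same hypotheses, the Darboux transform $v_2 = u_2' - \frac{g_0'}{g_0} u_2$ of the second SPPS solution $u_2 = g_0 \sum_{\text{odd } n} \frac{\omega^n}{n!} X^{(n)}$ equals $\frac{\omega}{g_0} \sum_{\text{even } n \geq 0} \frac{\omega^n}{n!} X^{(n)}$; consequently the general solution of $-v'' + (r + \omega^2) v = 0$ with $r = 2(g_0'/g_0)^2 - q$ is $v = \frac{c_1}{g_0} \sum_{\text{even } n} \frac{\omega^n}{n!} X^{(n)} + \frac{c_2}{g_0} \sum_{\text{odd } n} \frac{\omega^n}{n!} \widetilde{X}^{(n)}$. -/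
open scoped Nat

/-!
Let `E` and `O` be the even and odd SPPS series built with the weights `g₀⁻², g₀²`. The bound
`‖X⁽ⁿ⁾(x)‖ ≤ (B|x|)ⁿ`, with `B` bounding the weights, dominates both by exponential series,
so they may be differentiated termwise, and `X⁽ⁿ⁺¹⁾' = (n+1) X⁽ⁿ⁾ w` gives `E' = ω g₀² O` and
`O' = ω g₀⁻² E`. Hence `u₂ = g₀ O` has Darboux transform `g₀ O' = ω E / g₀`. For any pair with
`G' = ω g₀² H`, `H' = ω g₀⁻² G`, a direct computation using `g₀'' = q g₀` shows that `G / g₀`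
solves `-v'' + (2 (g₀'/g₀)² - q + ω²) v = 0`; both `(E, O)` and the pair `(Õ, Ẽ)` of series with
the weights swapped are such pairs.
-/

open Set Filter Topology MeasureTheory

section TermwiseDerivative

variable {U : Set ℝ} {f g : ℕ → ℝ → ℂ} {c : ℝ → ℂ} {u : ℕ → ℝ} {y₀ x : ℝ}

theorem hasDerivAt_tsum_of_hasDerivAt_mul (hU : IsOpen U) (hU' : IsPreconnected U)
    (hu : Summable u) (hf : ∀ k, ∀ y ∈ U, HasDerivAt (f k) (c y * g k y) y)
    (hbound : ∀ k, ∀ y ∈ U, ‖c y * g k y‖ ≤ u k) (hy₀ : y₀ ∈ U)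
    (hsum : Summable fun k => f k y₀) (hx : x ∈ U) :
    HasDerivAt (fun y => ∑' k, f k y) (c x * ∑' k, g k x) x := by
  simpa only [tsum_mul_left] using
    hasDerivAt_tsum_of_isPreconnected hu hU hU' hf hbound hy₀ hsum hx

theorem hasDerivAt_tsum_of_hasDerivAt_succ_mul (hU : IsOpen U) (hU' : IsPreconnected U)
    (hu : Summable u) (hf₀ : ∀ y ∈ U, HasDerivAt (f 0) 0 y)
    (hf : ∀ k, ∀ y ∈ U, HasDerivAt (f (k + 1)) (c y * g k y) y)
    (hbound : ∀ k, ∀ y ∈ U, ‖c y * g k y‖ ≤ u k) (hy₀ : y₀ ∈ U)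
    (hsum : Summable fun k => f k y₀) (hx : x ∈ U) :
    HasDerivAt (fun y => ∑' k, f k y) (c x * ∑' k, g k x) x := by
  have hsum_succ : Summable fun k => f (k + 1) y₀ :=
    (summable_nat_add_iff (f := (f · y₀)) 1).2 hsum
  have hsplit : ∀ y ∈ U, ∑' k, f k y = f 0 y + ∑' k, f (k + 1) y := fun y hy =>
    ((summable_nat_add_iff (f := (f · y)) 1).1 <|
      summable_of_summable_hasDerivAt_of_isPreconnected hu hU hU' hf hbound hy₀ hsum_succ hy
      ).tsum_eq_zero_add
  have h := (hf₀ x hx).add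
    (hasDerivAt_tsum_of_hasDerivAt_mul hU hU' hu hf hbound hy₀ hsum_succ hx)
  rw [zero_add] at h
  exact h.congr_of_eventuallyEq (eventually_of_mem (hU.mem_nhds hx) hsplit)

end TermwiseDerivative

section RecursiveIntegrals

variable {a b : ℝ} {w₁ w₂ : ℝ → ℂ}

theorem hasDerivAt_spps_succ_of_continuousOn_s12 (h0 : (0 : ℝ) ∈ Ioo a b)
    (hw₁ : ContinuousOn w₁ (Ioo a b)) (hw₂ : ContinuousOn w₂ (Ioo a b)) {n : ℕ}
    (hn : ContinuousOn (spps w₁ w₂ n) (Ioo a b)) {x : ℝ} (hx : x ∈ Ioo a b) :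
    HasDerivAt (spps w₁ w₂ (n + 1))
      ((n + 1 : ℂ) * (spps w₁ w₂ n x * if (n + 1) % 2 = 1 then w₁ x else w₂ x)) x := by
  have hF : ContinuousOn
      (fun t => spps w₁ w₂ n t * if (n + 1) % 2 = 1 then w₁ t else w₂ t) (Ioo a b) :=
    hn.mul (by split_ifs <;> assumption)
  exact (intervalIntegral.integral_hasDerivAt_right
    ((hF.mono (ordConnected_Ioo.uIcc_subset h0 hx)).intervalIntegrable)
    (hF.stronglyMeasurableAtFilter isOpen_Ioo x hx)
    (hF.continuousAt (isOpen_Ioo.mem_nhds hx))).const_mul _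

theorem continuousOn_spps_s12 (h0 : (0 : ℝ) ∈ Ioo a b)
    (hw₁ : ContinuousOn w₁ (Ioo a b)) (hw₂ : ContinuousOn w₂ (Ioo a b)) :
    ∀ n, ContinuousOn (spps w₁ w₂ n) (Ioo a b)
  | 0 => continuousOn_const
  | n + 1 => fun _ hx => (hasDerivAt_spps_succ_of_continuousOn_s12 h0 hw₁ hw₂
      (continuousOn_spps_s12 h0 hw₁ hw₂ n) hx).continuousAt.continuousWithinAt

theorem norm_spps_le_s12 (h0 : (0 : ℝ) ∈ Ioo a b) {B : ℝ}
    (hB₁ : ∀ t ∈ Ioo a b, ‖w₁ t‖ ≤ B) (hB₂ : ∀ t ∈ Ioo a b, ‖w₂ t‖ ≤ B) :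
    ∀ n, ∀ x ∈ Ioo a b, ‖spps w₁ w₂ n x‖ ≤ (B * |x|) ^ n
  | 0, x, _ => by simp [spps]
  | n + 1, x, hx => by
    have hB : 0 ≤ B := (norm_nonneg _).trans (hB₁ 0 h0)
    have hint : ‖∫ t in (0 : ℝ)..x, spps w₁ w₂ n t *
        if (n + 1) % 2 = 1 then w₁ t else w₂ t‖ ≤ B ^ (n + 1) * (|x| ^ (n + 1) / (n + 1)) := by
      rw [intervalIntegral.norm_intervalIntegral_eq]
      refine (norm_integral_le_of_norm_le (g := fun t => B ^ (n + 1) * |t - 0| ^ n)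
        (Continuous.integrableOn_uIoc (by fun_prop))
        (ae_restrict_of_forall_mem measurableSet_uIoc fun t ht => ?_)).trans_eq ?_
      · have ht' : t ∈ Ioo a b := ordConnected_Ioo.uIcc_subset h0 hx (uIoc_subset_uIcc ht)
        have hw : ‖if (n + 1) % 2 = 1 then w₁ t else w₂ t‖ ≤ B := by
          split_ifs
          exacts [hB₁ t ht', hB₂ t ht']
        calc _ ≤ (B * |t|) ^ n * B :=
              norm_mul_le_of_le (norm_spps_le_s12 h0 hB₁ hB₂ n t ht') hw
          _ = B ^ (n + 1) * |t - 0| ^ n := by rw [sub_zero]; ring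
      · rw [integral_const_mul, integral_pow_abs_sub_uIoc, sub_zero]
    calc ‖spps w₁ w₂ (n + 1) x‖
        = (n + 1) * ‖∫ t in (0 : ℝ)..x, spps w₁ w₂ n t *
            if (n + 1) % 2 = 1 then w₁ t else w₂ t‖ := by
          simp only [spps, norm_mul]; norm_cast
      _ ≤ (n + 1) * (B ^ (n + 1) * (|x| ^ (n + 1) / (n + 1))) := by gcongr
      _ = (B * |x|) ^ (n + 1) := by field_simp; ring

end RecursiveIntegrals

section Series

variable {a b B : ℝ} {w₁ w₂ : ℝ → ℂ} (ω : ℂ)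

noncomputable def sppsTerm (w₁ w₂ : ℝ → ℂ) (ω : ℂ) (n : ℕ) (x : ℝ) : ℂ :=
  ω ^ n / (n ! : ℂ) * spps w₁ w₂ n x

noncomputable def sppsEven (w₁ w₂ : ℝ → ℂ) (ω : ℂ) (x : ℝ) : ℂ :=
  ∑' k, sppsTerm w₁ w₂ ω (2 * k) x

noncomputable def sppsOdd (w₁ w₂ : ℝ → ℂ) (ω : ℂ) (x : ℝ) : ℂ :=
  ∑' k, sppsTerm w₁ w₂ ω (2 * k + 1) x

theorem sppsTerm_zero : sppsTerm w₁ w₂ ω 0 = fun _ => 1 := by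
  funext
  simp [sppsTerm, spps]

theorem hasDerivAt_sppsTerm_succ (h0 : (0 : ℝ) ∈ Ioo a b)
    (hw₁ : ContinuousOn w₁ (Ioo a b)) (hw₂ : ContinuousOn w₂ (Ioo a b)) (n : ℕ) {x : ℝ}
    (hx : x ∈ Ioo a b) :
    HasDerivAt (sppsTerm w₁ w₂ ω (n + 1))
      (ω * (if (n + 1) % 2 = 1 then w₁ x else w₂ x) * sppsTerm w₁ w₂ ω n x) x := by
  refine ((hasDerivAt_spps_succ_of_continuousOn_s12 h0 hw₁ hw₂
    (continuousOn_spps_s12 h0 hw₁ hw₂ n) hx).const_mul (ω ^ (n + 1) / ((n + 1)! : ℂ))).congr_deriv ?_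
  simp only [sppsTerm, Nat.factorial_succ]
  push_cast
  field_simp
  ring

theorem norm_sppsTerm_le (h0 : (0 : ℝ) ∈ Ioo a b)
    (hB₁ : ∀ t ∈ Ioo a b, ‖w₁ t‖ ≤ B) (hB₂ : ∀ t ∈ Ioo a b, ‖w₂ t‖ ≤ B) (n : ℕ) {x : ℝ}
    (hx : x ∈ Ioo a b) :
    ‖sppsTerm w₁ w₂ ω n x‖ ≤ (‖ω‖ * B * max |a| |b|) ^ n / n ! := by
  have hB : 0 ≤ B := (norm_nonneg _).trans (hB₁ 0 h0)
  calc ‖sppsTerm w₁ w₂ ω n x‖ = ‖ω‖ ^ n / n ! * ‖spps w₁ w₂ n x‖ := by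
        simp only [sppsTerm, norm_mul, norm_div, norm_pow, Complex.norm_natCast]
    _ ≤ ‖ω‖ ^ n / n ! * (B * max |a| |b|) ^ n := by
        gcongr
        exact (norm_spps_le_s12 h0 hB₁ hB₂ n x hx).trans
          (by gcongr; exact abs_le_max_abs_abs hx.1.le hx.2.le)
    _ = (‖ω‖ * B * max |a| |b|) ^ n / n ! := by ring

theorem summable_sppsTerm_comp (h0 : (0 : ℝ) ∈ Ioo a b)
    (hB₁ : ∀ t ∈ Ioo a b, ‖w₁ t‖ ≤ B) (hB₂ : ∀ t ∈ Ioo a b, ‖w₂ t‖ ≤ B)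
    {m : ℕ → ℕ} (hm : Function.Injective m) {x : ℝ} (hx : x ∈ Ioo a b) :
    Summable fun k => sppsTerm w₁ w₂ ω (m k) x :=
  .of_norm_bounded ((Real.summable_pow_div_factorial _).comp_injective hm)
    fun k => norm_sppsTerm_le ω h0 hB₁ hB₂ (m k) hx

theorem norm_mul_sppsTerm_le (h0 : (0 : ℝ) ∈ Ioo a b)
    (hB₁ : ∀ t ∈ Ioo a b, ‖w₁ t‖ ≤ B) (hB₂ : ∀ t ∈ Ioo a b, ‖w₂ t‖ ≤ B) {w : ℝ → ℂ}
    (hw : ∀ t ∈ Ioo a b, ‖w t‖ ≤ B) (n : ℕ) {x : ℝ} (hx : x ∈ Ioo a b) :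
    ‖ω * w x * sppsTerm w₁ w₂ ω n x‖ ≤ ‖ω‖ * B * ((‖ω‖ * B * max |a| |b|) ^ n / n !) := by
  have hB : 0 ≤ B := (norm_nonneg _).trans (hB₁ 0 h0)
  rw [norm_mul, norm_mul]
  gcongr
  exacts [hw x hx, norm_sppsTerm_le ω h0 hB₁ hB₂ n hx]

theorem hasDerivAt_sppsOdd (h0 : (0 : ℝ) ∈ Ioo a b)
    (hw₁ : ContinuousOn w₁ (Ioo a b)) (hw₂ : ContinuousOn w₂ (Ioo a b))
    (hB₁ : ∀ t ∈ Ioo a b, ‖w₁ t‖ ≤ B) (hB₂ : ∀ t ∈ Ioo a b, ‖w₂ t‖ ≤ B) {x : ℝ}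
    (hx : x ∈ Ioo a b) :
    HasDerivAt (sppsOdd w₁ w₂ ω) (ω * w₁ x * sppsEven w₁ w₂ ω x) x := by
  have hm : Function.Injective fun k : ℕ => 2 * k := fun i j (h : 2 * i = 2 * j) => by omega
  refine hasDerivAt_tsum_of_hasDerivAt_mul (c := fun y => ω * w₁ y) isOpen_Ioo
    ordConnected_Ioo.isPreconnected
    (((Real.summable_pow_div_factorial _).comp_injective hm).mul_left (‖ω‖ * B))
    (fun k y hy => ?_) (fun k y hy => norm_mul_sppsTerm_le ω h0 hB₁ hB₂ hB₁ (2 * k) hy) h0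
    (summable_sppsTerm_comp ω h0 hB₁ hB₂ (fun i j (h : 2 * i + 1 = 2 * j + 1) => by omega) h0)
    hx
  have h := hasDerivAt_sppsTerm_succ ω h0 hw₁ hw₂ (2 * k) hy
  rwa [if_pos (by omega)] at h

theorem hasDerivAt_sppsEven (h0 : (0 : ℝ) ∈ Ioo a b)
    (hw₁ : ContinuousOn w₁ (Ioo a b)) (hw₂ : ContinuousOn w₂ (Ioo a b))
    (hB₁ : ∀ t ∈ Ioo a b, ‖w₁ t‖ ≤ B) (hB₂ : ∀ t ∈ Ioo a b, ‖w₂ t‖ ≤ B) {x : ℝ}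
    (hx : x ∈ Ioo a b) :
    HasDerivAt (sppsEven w₁ w₂ ω) (ω * w₂ x * sppsOdd w₁ w₂ ω x) x := by
  have hm : Function.Injective fun k : ℕ => 2 * k + 1 :=
    fun i j (h : 2 * i + 1 = 2 * j + 1) => by omega
  refine hasDerivAt_tsum_of_hasDerivAt_succ_mul (c := fun y => ω * w₂ y) isOpen_Ioo
    ordConnected_Ioo.isPreconnected
    (((Real.summable_pow_div_factorial _).comp_injective hm).mul_left (‖ω‖ * B))
    (fun y _ => ?_) (fun k y hy => ?_)
    (fun k y hy => norm_mul_sppsTerm_le ω h0 hB₁ hB₂ hB₂ (2 * k + 1) hy) h0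
    (summable_sppsTerm_comp ω h0 hB₁ hB₂ (fun i j (h : 2 * i = 2 * j) => by omega) h0) hx
  · rw [Nat.mul_zero, sppsTerm_zero]
    exact hasDerivAt_const y 1
  have h := hasDerivAt_sppsTerm_succ ω h0 hw₁ hw₂ (2 * k + 1) hy
  rwa [if_neg (by omega), show 2 * k + 1 + 1 = 2 * (k + 1) by ring] at h

end Series

section Darboux

noncomputable def darboux (g u : ℝ → ℂ) (x : ℝ) : ℂ :=
  deriv u x - deriv g x / g x * u x

variable {g q G H : ℝ → ℂ} {ω : ℂ} {x : ℝ}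

theorem darboux_mul_eq (hg : HasDerivAt g (deriv g x) x) (hgx : g x ≠ 0)
    (hH : HasDerivAt H (ω * (g x ^ 2)⁻¹ * G x) x) :
    darboux g (fun y => g y * H y) x = ω / g x * G x := by
  rw [darboux, (hg.fun_mul hH).deriv]
  field_simp
  ring

theorem hasDerivAt_const_div_mul (hg : HasDerivAt g (deriv g x) x) (hgx : g x ≠ 0)
    (hG : HasDerivAt G (ω * g x ^ 2 * H x) x) (c : ℂ) :
    HasDerivAt (fun y => c / g y * G y)
      (c * (ω * g x * H x - deriv g x / g x ^ 2 * G x)) x := by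
  refine (((hasDerivAt_const x c).fun_div hg hgx).fun_mul hG).congr_deriv ?_
  field_simp
  ring

theorem hasDerivAt_deriv_const_div_mul (hg : HasDerivAt g (deriv g x) x)
    (hg' : HasDerivAt (deriv g) (q x * g x) x) (hgx : g x ≠ 0)
    (hG : HasDerivAt G (ω * g x ^ 2 * H x) x) (hH : HasDerivAt H (ω * (g x ^ 2)⁻¹ * G x) x)
    (c : ℂ) :
    HasDerivAt (fun y => c * (ω * g y * H y - deriv g y / g y ^ 2 * G y))
      ((2 * (deriv g x / g x) ^ 2 - q x + ω ^ 2) * (c / g x * G x)) x := by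
  refine (((((hasDerivAt_const x ω).fun_mul hg).fun_mul hH).fun_sub
    ((hg'.fun_div (hg.fun_pow 2) (pow_ne_zero 2 hgx)).fun_mul hG)).const_mul c).congr_deriv ?_
  field_simp
  ring

theorem neg_deriv_deriv_add_add_mul_eq_zero {U : Set ℝ} (hU : IsOpen U) {f₁ f₂ D₁ D₂ : ℝ → ℂ}
    (hf₁ : ∀ y ∈ U, HasDerivAt f₁ (D₁ y) y) (hf₂ : ∀ y ∈ U, HasDerivAt f₂ (D₂ y) y) {p : ℂ}
    (hD₁ : HasDerivAt D₁ (p * f₁ x) x) (hD₂ : HasDerivAt D₂ (p * f₂ x) x) (hx : x ∈ U) :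
    -deriv (deriv fun y => f₁ y + f₂ y) x + p * (f₁ x + f₂ x) = 0 := by
  have hderiv : deriv (fun y => f₁ y + f₂ y) =ᶠ[𝓝 x] fun y => D₁ y + D₂ y :=
    eventually_of_mem (hU.mem_nhds hx) fun y hy => ((hf₁ y hy).add (hf₂ y hy)).deriv
  rw [hderiv.deriv_eq, (hD₁.fun_add hD₂).deriv]
  ring

end Darboux

theorem darboux_transform_u2_general (a b : ℝ) (ha : a < 0) (hb : 0 < b) (ω : ℂ)
    (q g0 : ℝ → ℂ)
    (hg : ContDiffOn ℝ 2 g0 (Set.Ioo a b))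
    (hg0 : ∀ x ∈ Set.Ioo a b, g0 x ≠ 0)
    (heq : ∀ x ∈ Set.Ioo a b, deriv (deriv g0) x = q x * g0 x)
    (hbd : ∃ M : ℝ, ∀ x ∈ Set.Ioo a b, ‖g0 x‖ ≤ M ∧ ‖(g0 x)⁻¹‖ ≤ M)
    (u2 v2 : ℝ → ℂ)
    (hu2 : u2 = fun x => g0 x * ∑' k : ℕ,
      ω ^ (2 * k + 1) / ((2 * k + 1)! : ℂ) *
        spps (fun t => (g0 t ^ 2)⁻¹) (fun t => g0 t ^ 2) (2 * k + 1) x)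
    (hv2 : v2 = fun x => deriv u2 x - deriv g0 x / g0 x * u2 x) :
    (∀ x ∈ Set.Ioo a b,
      v2 x = ω / g0 x * ∑' k : ℕ,
        ω ^ (2 * k) / ((2 * k)! : ℂ) *
          spps (fun t => (g0 t ^ 2)⁻¹) (fun t => g0 t ^ 2) (2 * k) x) ∧
    (∀ c1 c2 : ℂ, ∀ x ∈ Set.Ioo a b,
      -(deriv (deriv (fun y =>
          c1 / g0 y * ∑' k : ℕ, ω ^ (2 * k) / ((2 * k)! : ℂ) *
            spps (fun t => (g0 t ^ 2)⁻¹) (fun t => g0 t ^ 2) (2 * k) y +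
          c2 / g0 y * ∑' k : ℕ, ω ^ (2 * k + 1) / ((2 * k + 1)! : ℂ) *
            spps (fun t => g0 t ^ 2) (fun t => (g0 t ^ 2)⁻¹) (2 * k + 1) y)) x) +
        ((2 * (deriv g0 x / g0 x) ^ 2 - q x) + ω ^ 2) *
          (c1 / g0 x * ∑' k : ℕ, ω ^ (2 * k) / ((2 * k)! : ℂ) *
            spps (fun t => (g0 t ^ 2)⁻¹) (fun t => g0 t ^ 2) (2 * k) x +
           c2 / g0 x * ∑' k : ℕ, ω ^ (2 * k + 1) / ((2 * k + 1)! : ℂ) *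
            spps (fun t => g0 t ^ 2) (fun t => (g0 t ^ 2)⁻¹) (2 * k + 1) x) = 0) := by
  obtain ⟨M, hM⟩ := hbd
  have h0 : (0 : ℝ) ∈ Ioo a b := ⟨ha, hb⟩
  have hg₁ : ∀ x ∈ Ioo a b, HasDerivAt g0 (deriv g0 x) x := fun x hx =>
    ((hg.differentiableOn two_ne_zero).differentiableAt (isOpen_Ioo.mem_nhds hx)).hasDerivAt
  have hg₂ : ∀ x ∈ Ioo a b, HasDerivAt (deriv g0) (q x * g0 x) x := fun x hx =>
    heq x hx ▸ (((hg.deriv_of_isOpen isOpen_Ioo (by norm_num)).differentiableOn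
      one_ne_zero).differentiableAt (isOpen_Ioo.mem_nhds hx)).hasDerivAt
  have hw : ContinuousOn (fun t => g0 t ^ 2) (Ioo a b) := hg.continuousOn.pow 2
  have hw' : ContinuousOn (fun t => (g0 t ^ 2)⁻¹) (Ioo a b) :=
    hw.inv₀ fun t ht => pow_ne_zero 2 (hg0 t ht)
  have hB : ∀ t ∈ Ioo a b, ‖g0 t ^ 2‖ ≤ M ^ 2 := fun t ht => by
    rw [norm_pow]; exact pow_le_pow_left₀ (norm_nonneg _) (hM t ht).1 2
  have hB' : ∀ t ∈ Ioo a b, ‖(g0 t ^ 2)⁻¹‖ ≤ M ^ 2 := fun t ht => by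
    rw [← inv_pow, norm_pow]; exact pow_le_pow_left₀ (norm_nonneg _) (hM t ht).2 2
  have hE := fun y (hy : y ∈ Ioo a b) => hasDerivAt_sppsEven ω h0 hw' hw hB' hB hy
  have hO := fun y (hy : y ∈ Ioo a b) => hasDerivAt_sppsOdd ω h0 hw' hw hB' hB hy
  have hE' := fun y (hy : y ∈ Ioo a b) => hasDerivAt_sppsEven ω h0 hw hw' hB hB' hy
  have hO' := fun y (hy : y ∈ Ioo a b) => hasDerivAt_sppsOdd ω h0 hw hw' hB hB' hy
  refine ⟨fun x hx => ?_, fun c1 c2 x hx => ?_⟩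
  · subst hu2 hv2
    exact darboux_mul_eq (hg₁ x hx) (hg0 x hx) (hO x hx)
  · exact neg_deriv_deriv_add_add_mul_eq_zero isOpen_Ioo
      (fun y hy => hasDerivAt_const_div_mul (hg₁ y hy) (hg0 y hy) (hE y hy) c1)
      (fun y hy => hasDerivAt_const_div_mul (hg₁ y hy) (hg0 y hy) (hO' y hy) c2)
      (hasDerivAt_deriv_const_div_mul (hg₁ x hx) (hg₂ x hx) (hg0 x hx) (hE x hx) (hO x hx) c1)
      (hasDerivAt_deriv_const_div_mul (hg₁ x hx) (hg₂ x hx) (hg0 x hx) (hO' x hx) (hE' x hx) c2) hx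

/-- The Darboux transform `v₂ = u₂' - (g₀'/g₀) u₂` of
`u₂ = g₀ ∑_{odd n} ωⁿ/n! X⁽ⁿ⁾` equals `(ω/g₀) ∑_{even n} ωⁿ/n! X⁽ⁿ⁾`, and every
combination `v = (c₁/g₀) ∑_{even n} ωⁿ/n! X⁽ⁿ⁾ + (c₂/g₀) ∑_{odd n} ωⁿ/n! X̃⁽ⁿ⁾`
solves `-v'' + (r + ω²) v = 0` with `r = 2(g₀'/g₀)² - q`. -/
theorem darboux_transform_u2 (a b : ℝ) (ha : a < 0) (hb : 0 < b) (ω : ℂ)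
    (q g0 : ℝ → ℂ)
    (hq : ContinuousOn q (Set.Ioo a b))
    (hg : ContDiffOn ℝ 2 g0 (Set.Ioo a b))
    (hg0 : ∀ x ∈ Set.Ioo a b, g0 x ≠ 0)
    (heq : ∀ x ∈ Set.Ioo a b, deriv (deriv g0) x = q x * g0 x)
    (hbd : ∃ M : ℝ, ∀ x ∈ Set.Ioo a b, ‖g0 x‖ ≤ M ∧ ‖(g0 x)⁻¹‖ ≤ M)
    (u2 v2 : ℝ → ℂ)
    (hu2 : u2 = fun x => g0 x * ∑' k : ℕ,
      ω ^ (2 * k + 1) / ((2 * k + 1)! : ℂ) *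
        spps (fun t => (g0 t ^ 2)⁻¹) (fun t => g0 t ^ 2) (2 * k + 1) x)
    (hv2 : v2 = fun x => deriv u2 x - deriv g0 x / g0 x * u2 x) :
    (∀ x ∈ Set.Ioo a b,
      v2 x = ω / g0 x * ∑' k : ℕ,
        ω ^ (2 * k) / ((2 * k)! : ℂ) *
          spps (fun t => (g0 t ^ 2)⁻¹) (fun t => g0 t ^ 2) (2 * k) x) ∧
    (∀ c1 c2 : ℂ, ∀ x ∈ Set.Ioo a b,
      -(deriv (deriv (fun y =>
          c1 / g0 y * ∑' k : ℕ, ω ^ (2 * k) / ((2 * k)! : ℂ) *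
            spps (fun t => (g0 t ^ 2)⁻¹) (fun t => g0 t ^ 2) (2 * k) y +
          c2 / g0 y * ∑' k : ℕ, ω ^ (2 * k + 1) / ((2 * k + 1)! : ℂ) *
            spps (fun t => g0 t ^ 2) (fun t => (g0 t ^ 2)⁻¹) (2 * k + 1) y)) x) +
        ((2 * (deriv g0 x / g0 x) ^ 2 - q x) + ω ^ 2) *
          (c1 / g0 x * ∑' k : ℕ, ω ^ (2 * k) / ((2 * k)! : ℂ) *
            spps (fun t => (g0 t ^ 2)⁻¹) (fun t => g0 t ^ 2) (2 * k) x +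
           c2 / g0 x * ∑' k : ℕ, ω ^ (2 * k + 1) / ((2 * k + 1)! : ℂ) *
            spps (fun t => g0 t ^ 2) (fun t => (g0 t ^ 2)⁻¹) (2 * k + 1) x) = 0) :=
  darboux_transform_u2_general a b ha hb ω q g0 hg hg0 heq hbd u2 v2 hu2 hv2
end

section
/- Let $f$ be a nonvanishing real-valued $C^2$ function on a domain $\Omega \subset \mathbb{R}^2$ and let $W = W_1 + i W_2$ (with $W_1, W_2$ real) be a $C^2$ solution of the main Vekua equation $\partial_{\bar z} W = \frac{\partial_{\bar z} f}{f} \overline{W}$ on $\Omega$. Then $W_1$ satisfies the Schrödinger equation $-\Delta W_1 + \frac{\Delta f}{f} W_1 = 0$ and $W_2$ satisfies $-\Delta W_2 + \big( \frac{2|\nabla f|^2}{f^2} - \frac{\Delta f}{f} \big) W_2 = 0$ on $\Omega$. -/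
/-!
Writing `W = U + i V`, the Vekua equation is the real first-order system
`f (U_x - V_y) = f_x U + f_y V`, `f (U_y + V_x) = f_y U - f_x V`.
Differentiate it once and use the symmetry of second derivatives: the `x`-derivative of the
first equation plus the `y`-derivative of the second gives `f ΔU = Δf U`, while `f` times the
`x`-derivative of the second minus the `y`-derivative of the first, after eliminating first
derivatives of `U` and `V` with the system itself, gives `f² ΔV = (2 |∇f|² - f Δf) V`.
-/
open Filter Topology Function Complex

section

variable {E F : Type*} [NormedAddCommGroup E] [NormedSpace ℝ E]
  [NormedAddCommGroup F] [NormedSpace ℝ F]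

theorem ContDiffAt.hasFDerivAt_fderiv_apply {g : E → F} {p : E} (hg : ContDiffAt ℝ 2 g p)
    (v : E) : HasFDerivAt (fun q => fderiv ℝ g q v) ((fderiv ℝ (fderiv ℝ g) p).flip v) p := by
  have hg' := (hg.fderiv_right one_add_one_eq_two.le).differentiableAt one_ne_zero
  simpa using hg'.hasFDerivAt.clm_apply (hasFDerivAt_const v p)

theorem deriv_deriv_comp_of_hasDerivAt {g : E → F} {ℓ : ℝ → E} {v : E}
    (hℓ : ∀ t, HasDerivAt ℓ v t) {t₀ : ℝ} (hg : ContDiffAt ℝ 2 g (ℓ t₀)) :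
    deriv (deriv (g ∘ ℓ)) t₀ = fderiv ℝ (fderiv ℝ g) (ℓ t₀) v v := by
  have hnear : deriv (g ∘ ℓ) =ᶠ[𝓝 t₀] fun t => fderiv ℝ g (ℓ t) v := by
    filter_upwards [(hℓ t₀).continuousAt.eventually (hg.eventually (by simp))] with t ht
    exact ((ht.differentiableAt two_ne_zero).hasFDerivAt.comp_hasDerivAt t (hℓ t)).deriv
  rw [hnear.deriv_eq]
  exact ((hg.hasFDerivAt_fderiv_apply v).comp_hasDerivAt t₀ (hℓ t₀)).deriv

end

section

variable {F : Type*} [NormedAddCommGroup F] [NormedSpace ℝ F] {w : ℝ → ℝ → F} {x y : ℝ}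

theorem hasDerivAt_fst_slice (hw : DifferentiableAt ℝ (uncurry w) (x, y)) :
    HasDerivAt (fun s => w s y) (fderiv ℝ (uncurry w) (x, y) (1, 0)) x :=
  (hw.hasFDerivAt.comp_hasDerivAt x ((hasDerivAt_id x).prodMk (hasDerivAt_const x y)) :)

theorem hasDerivAt_snd_slice (hw : DifferentiableAt ℝ (uncurry w) (x, y)) :
    HasDerivAt (fun s => w x s) (fderiv ℝ (uncurry w) (x, y) (0, 1)) y :=
  (hw.hasFDerivAt.comp_hasDerivAt y ((hasDerivAt_const y x).prodMk (hasDerivAt_id y)) :)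

noncomputable def planeLaplacian (g : ℝ × ℝ → F) (p : ℝ × ℝ) : F :=
  fderiv ℝ (fderiv ℝ g) p (1, 0) (1, 0) + fderiv ℝ (fderiv ℝ g) p (0, 1) (0, 1)

theorem deriv_deriv_add_deriv_deriv_eq_planeLaplacian (hw : ContDiffAt ℝ 2 (uncurry w) (x, y)) :
    deriv (fun t => deriv (fun s => w s y) t) x + deriv (fun t => deriv (fun s => w x s) t) y =
      planeLaplacian (uncurry w) (x, y) :=
  congrArg₂ (· + ·)
    (deriv_deriv_comp_of_hasDerivAt (ℓ := fun s => (s, y))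
      (fun t => (hasDerivAt_id t).prodMk (hasDerivAt_const t y)) hw)
    (deriv_deriv_comp_of_hasDerivAt (ℓ := fun s => (x, s))
      (fun t => (hasDerivAt_const t x).prodMk (hasDerivAt_id t)) hw)

end

/-- The real and imaginary parts of `2 F ∂_z̄ W = 2 ∂_z̄ F · conj W` for `W = U + i V`. -/
def IsVekuaSystemAt (F U V : ℝ × ℝ → ℝ) (q : ℝ × ℝ) : Prop :=
  F q * (fderiv ℝ U q (1, 0) - fderiv ℝ V q (0, 1)) =
      fderiv ℝ F q (1, 0) * U q + fderiv ℝ F q (0, 1) * V q ∧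
    F q * (fderiv ℝ U q (0, 1) + fderiv ℝ V q (1, 0)) =
      fderiv ℝ F q (0, 1) * U q - fderiv ℝ F q (1, 0) * V q

theorem planeLaplacian_eqs_of_isVekuaSystemAt {F U V : ℝ × ℝ → ℝ} {p : ℝ × ℝ}
    (hF : ContDiffAt ℝ 2 F p) (hU : ContDiffAt ℝ 2 U p) (hV : ContDiffAt ℝ 2 V p)
    (hsys : ∀ᶠ q in 𝓝 p, IsVekuaSystemAt F U V q) :
    F p * planeLaplacian U p = planeLaplacian F p * U p ∧
      F p ^ 2 * planeLaplacian V p =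
        (2 * (fderiv ℝ F p (1, 0) ^ 2 + fderiv ℝ F p (0, 1) ^ 2) - F p * planeLaplacian F p) *
          V p := by
  have hF' := hF.hasFDerivAt_fderiv_apply
  have hU' := hU.hasFDerivAt_fderiv_apply
  have hV' := hV.hasFDerivAt_fderiv_apply
  have hF₁ := (hF.differentiableAt two_ne_zero).hasFDerivAt
  have hU₁ := (hU.differentiableAt two_ne_zero).hasFDerivAt
  have hV₁ := (hV.differentiableAt two_ne_zero).hasFDerivAt
  have hA := (hF₁.mul ((hU' (1, 0)).sub (hV' (0, 1)))).unique
    ((((hF' (1, 0)).mul hU₁).add ((hF' (0, 1)).mul hV₁)).congr_of_eventuallyEq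
      (hsys.mono fun _ h => h.1))
  have hB := (hF₁.mul ((hU' (0, 1)).add (hV' (1, 0)))).unique
    ((((hF' (0, 1)).mul hU₁).sub ((hF' (1, 0)).mul hV₁)).congr_of_eventuallyEq
      (hsys.mono fun _ h => h.2))
  have hA₁ := congrArg (· (1, 0)) hA
  have hA₂ := congrArg (· (0, 1)) hA
  have hB₁ := congrArg (· (1, 0)) hB
  have hB₂ := congrArg (· (0, 1)) hB
  simp only [add_apply, sub_apply, smul_apply, ContinuousLinearMap.flip_apply, smul_eq_mul,
    Pi.add_apply, Pi.sub_apply] at hA₁ hA₂ hB₁ hB₂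
  have symm {G : ℝ × ℝ → ℝ} (hG : ContDiffAt ℝ 2 G p) :=
    hG.isSymmSndFDerivAt (by simp) (0, 1) (1, 0)
  rw [symm hU, symm hF] at hA₂
  rw [symm hV, symm hF] at hB₂
  obtain ⟨hAp, hBp⟩ := hsys.self_of_nhds
  unfold planeLaplacian
  constructor
  · linear_combination hA₁ + hB₂
  · linear_combination F p * hB₁ - F p * hA₂ + 2 * fderiv ℝ F p (0, 1) * hAp
      - 2 * fderiv ℝ F p (1, 0) * hBp

theorem vekua_eq_re_im {f fx fy ux uy vx vy u v : ℝ} (hf : f ≠ 0)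
    (h : (1 / 2 : ℂ) * ((ux + I * vx) + I * (uy + I * vy)) =
      ((1 / 2 : ℂ) * (fx + I * fy) / f) * starRingEnd ℂ (u + I * v)) :
    f * (ux - vy) = fx * u + fy * v ∧ f * (uy + vx) = fy * u - fx * v := by
  have hfC : (f : ℂ) ≠ 0 := Complex.ofReal_ne_zero.mpr hf
  field_simp at h
  obtain ⟨hre, him⟩ := Complex.ext_iff.mp h
  simp only [mul_re, add_re, ofReal_re, I_re, zero_mul, I_im, ofReal_im, mul_zero, sub_self,
    add_zero, add_im, mul_im, one_mul, zero_add, zero_sub, sub_zero, map_add, conj_ofReal, map_mul,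
    conj_I, neg_mul, neg_re, neg_zero, neg_im, mul_neg, sub_neg_eq_add] at hre him
  constructor <;> linarith

theorem HasDerivAt.ofReal_add_I_mul {u v : ℝ → ℝ} {u' v' x : ℝ} (hu : HasDerivAt u u' x)
    (hv : HasDerivAt v v' x) :
    HasDerivAt (fun t => (u t : ℂ) + I * v t) (u' + I * v') x :=
  hu.ofReal_comp.add (hv.ofReal_comp.const_mul I)

theorem isVekuaSystemAt_of_vekua_eq {f W1 W2 : ℝ → ℝ → ℝ} {x y : ℝ}
    (hf : DifferentiableAt ℝ (uncurry f) (x, y)) (hW1 : DifferentiableAt ℝ (uncurry W1) (x, y))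
    (hW2 : DifferentiableAt ℝ (uncurry W2) (x, y)) (hf0 : f x y ≠ 0)
    (hVekua : (1 / 2 : ℂ) * (deriv (fun t => (W1 t y : ℂ) + I * W2 t y) x +
          I * deriv (fun t => (W1 x t : ℂ) + I * W2 x t) y) =
        ((1 / 2 : ℂ) * (deriv (fun t => (f t y : ℂ)) x +
            I * deriv (fun t => (f x t : ℂ)) y) / (f x y : ℂ)) *
          starRingEnd ℂ ((W1 x y : ℂ) + I * W2 x y)) :
    IsVekuaSystemAt (uncurry f) (uncurry W1) (uncurry W2) (x, y) := by
  rw [((hasDerivAt_fst_slice hW1).ofReal_add_I_mul (hasDerivAt_fst_slice hW2)).deriv,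
    ((hasDerivAt_snd_slice hW1).ofReal_add_I_mul (hasDerivAt_snd_slice hW2)).deriv,
    (hasDerivAt_fst_slice hf).ofReal_comp.deriv, (hasDerivAt_snd_slice hf).ofReal_comp.deriv]
    at hVekua
  exact vekua_eq_re_im hf0 hVekua

/-- Real and imaginary parts of a solution of the main Vekua equation
`∂_z̄ W = (∂_z̄ f / f) conj W` solve the Schrödinger equations with potentials
`Δf/f` and `2|∇f|²/f² - Δf/f` respectively. -/
theorem vekua_to_schrodinger (Ω : Set (ℝ × ℝ)) (hΩ : IsOpen Ω)
    (f W1 W2 : ℝ → ℝ → ℝ)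
    (hf : ContDiffOn ℝ 2 (fun p : ℝ × ℝ => f p.1 p.2) Ω)
    (hf0 : ∀ x y, (x, y) ∈ Ω → f x y ≠ 0)
    (hW1 : ContDiffOn ℝ 2 (fun p : ℝ × ℝ => W1 p.1 p.2) Ω)
    (hW2 : ContDiffOn ℝ 2 (fun p : ℝ × ℝ => W2 p.1 p.2) Ω)
    (hVekua : ∀ x y, (x, y) ∈ Ω →
      (1 / 2 : ℂ) * (deriv (fun t => (W1 t y : ℂ) + Complex.I * W2 t y) x +
          Complex.I * deriv (fun t => (W1 x t : ℂ) + Complex.I * W2 x t) y) =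
        ((1 / 2 : ℂ) * (deriv (fun t => (f t y : ℂ)) x +
            Complex.I * deriv (fun t => (f x t : ℂ)) y) / (f x y : ℂ)) *
          starRingEnd ℂ ((W1 x y : ℂ) + Complex.I * W2 x y)) :
    ∀ x y, (x, y) ∈ Ω →
      (-(deriv (fun t => deriv (fun s => W1 s y) t) x +
          deriv (fun t => deriv (fun s => W1 x s) t) y) +
        ((deriv (fun t => deriv (fun s => f s y) t) x +
          deriv (fun t => deriv (fun s => f x s) t) y) / f x y) * W1 x y = 0) ∧
      (-(deriv (fun t => deriv (fun s => W2 s y) t) x +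
          deriv (fun t => deriv (fun s => W2 x s) t) y) +
        (2 * ((deriv (fun s => f s y) x) ^ 2 + (deriv (fun s => f x s) y) ^ 2) /
            (f x y) ^ 2 -
          (deriv (fun t => deriv (fun s => f s y) t) x +
            deriv (fun t => deriv (fun s => f x s) t) y) / f x y) * W2 x y = 0) := by
  have hC2 {w : ℝ → ℝ → ℝ} (hw : ContDiffOn ℝ 2 (uncurry w) Ω) {q : ℝ × ℝ} (hq : q ∈ Ω) :
      ContDiffAt ℝ 2 (uncurry w) q :=
    hw.contDiffAt (hΩ.mem_nhds hq)
  have hC1 {w : ℝ → ℝ → ℝ} (hw : ContDiffOn ℝ 2 (uncurry w) Ω) {q : ℝ × ℝ} (hq : q ∈ Ω) :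
      DifferentiableAt ℝ (uncurry w) q :=
    (hC2 hw hq).differentiableAt two_ne_zero
  intro x y hxy
  have hsys : ∀ᶠ q in 𝓝 (x, y), IsVekuaSystemAt (uncurry f) (uncurry W1) (uncurry W2) q := by
    filter_upwards [hΩ.mem_nhds hxy] with ⟨a, b⟩ hab
    exact isVekuaSystemAt_of_vekua_eq (hC1 hf hab) (hC1 hW1 hab) (hC1 hW2 hab) (hf0 a b hab)
      (hVekua a b hab)
  obtain ⟨hre, him⟩ :=
    planeLaplacian_eqs_of_isVekuaSystemAt (hC2 hf hxy) (hC2 hW1 hxy) (hC2 hW2 hxy) hsys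
  simp only [uncurry_apply_pair] at hre him
  rw [deriv_deriv_add_deriv_deriv_eq_planeLaplacian (hC2 hW1 hxy),
    deriv_deriv_add_deriv_deriv_eq_planeLaplacian (hC2 hW2 hxy),
    deriv_deriv_add_deriv_deriv_eq_planeLaplacian (hC2 hf hxy),
    (hasDerivAt_fst_slice (hC1 hf hxy)).deriv, (hasDerivAt_snd_slice (hC1 hf hxy)).deriv]
  have hfxy := hf0 x y hxy
  constructor
  · field_simp
    linear_combination -hre
  · field_simp
    linear_combination -him
end
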